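/- For all reals v_0, v_1 with 0 ≤ v_0 ≤ v_1 and v_1 > 0, and every ε with 0 < ε < 1, there exists a positive integer k with k ≤ C·log(1/ε) + C for some absolute constant C (e.g. k = ⌈log(2/ε)/log(6/5)⌉ works) such that in the k-fold parallel repetition of NC_00(C_5) — a game on 5k players — every pure local strategy profile has social welfare at most ε · (v_0 + v_1)/2. In particular, the ratio of the best classical social welfare to the quantum social welfare (v_0 + v_1)/2 can be made at most ε using O(log(1/ε)) players with bounded personal utilities v_0, v_1. -/
import Mathlib


open Finset

/-- The 6 questions/types of the game on the 5-cycle: `none` is `Tₐ = 11111`;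
`some i` is the question `Tᵢ` giving input bit 1 to player `i` and 0 to the others. -/
abbrev C5Type := Option (ZMod 5)

/-- Input (type) bit of player `j` in question `t` of `MCG(C₅)`/`NC₀₀(C₅)`. -/
def inputBit : C5Type → ZMod 5 → ZMod 2
  | none, _ => 1
  | some i, j => if j = i then 1 else 0

/-- The involved set of question `t`: all five players for `Tₐ`;
`{i-1, i, i+1}` for `Tᵢ`. -/
def involvedSet : C5Type → Finset (ZMod 5)
  | none => Finset.univ
  | some i => {i - 1, i, i + 1}

/-- The target parity bit of question `t`: `1` for `Tₐ` and `0` for each `Tᵢ`. -/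
def targetBit : C5Type → ZMod 2
  | none => 1
  | some _ => 0

/-- Expected payoff of player `p` in the `k`-fold parallel repetition of
`NC₀₀(C₅)`: the `5k` players are indexed by `Fin k × ZMod 5` (group, vertex);
the question is a `k`-tuple `q` of types, independent and uniform (one per
group); each player answers a function of their own type bit; the global answer
wins iff every group wins on its own type, in which case player `p` receives
`v_{answer_p}`, and `0` otherwise. -/
noncomputable def kFoldUtil (k : ℕ) (v0 v1 : ℝ)
    (f : Fin k × ZMod 5 → ZMod 2 → ZMod 2) (p : Fin k × ZMod 5) : ℝ :=
  (∑ q : Fin k → C5Type,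
    if ∀ g : Fin k,
        ∑ j ∈ involvedSet (q g), f (g, j) (inputBit (q g) j) = targetBit (q g)
    then (if f p (inputBit (q p.1) p.2) = 1 then v1 else v0) else 0) / 6 ^ k


/-- Char-2 bookkeeping: the six parity constraints of `NC₀₀(C₅)` are jointly
unsatisfiable. -/
lemma c5_aux (a0 a1 a2 a3 a4 b0 b1 b2 b3 b4 : ZMod 2)
    (h0 : a4 + (b0 + a1) = 0) (h1 : a0 + (b1 + a2) = 0) (h2 : a1 + (b2 + a3) = 0)
    (h3 : a2 + (b3 + a4) = 0) (h4 : a3 + (b4 + a0) = 0)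
    (hn : b0 + (b1 + (b2 + (b3 + b4))) = 1) : False := by
  have hs : (a4+(b0+a1))+((a0+(b1+a2))+((a1+(b2+a3))+((a2+(b3+a4))+(a3+(b4+a0))))) = 0 := by
    rw [h0, h1, h2, h3, h4]; ring
  have hs2 : (a0+a0)+((a1+a1)+((a2+a2)+((a3+a3)+((a4+a4)+(b0+(b1+(b2+(b3+b4)))))))) = 0 := by
    linear_combination hs
  simp only [CharTwo.add_self_eq_zero, zero_add, hn] at hs2
  exact one_ne_zero hs2

/-- No local strategy wins all six questions of `NC₀₀(C₅)`. -/
lemma c5_core (f : ZMod 5 → ZMod 2 → ZMod 2) :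
    ¬ ∀ t : C5Type, ∑ j ∈ involvedSet t, f j (inputBit t j) = targetBit t := by
  intro h
  have h0 := h (some 0)
  have h1 := h (some 1)
  have h2 := h (some 2)
  have h3 := h (some 3)
  have h4 := h (some 4)
  have hn := h none
  simp only [involvedSet] at h0 h1 h2 h3 h4 hn
  rw [show Finset.univ (α := ZMod 5) = {0,1,2,3,4} from by decide] at hn
  rw [show ((0:ZMod 5)-1) = 4 from by decide] at h0
  rw [show ((1:ZMod 5)-1) = 0 from by decide, show ((1:ZMod 5)+1) = 2 from by decide] at h1
  rw [show ((2:ZMod 5)-1) = 1 from by decide, show ((2:ZMod 5)+1) = 3 from by decide] at h2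
  rw [show ((3:ZMod 5)-1) = 2 from by decide, show ((3:ZMod 5)+1) = 4 from by decide] at h3
  rw [show ((4:ZMod 5)-1) = 3 from by decide, show ((4:ZMod 5)+1) = 0 from by decide] at h4
  simp only [show ((0:ZMod 5)+1) = 1 from by decide] at h0
  simp (config := { decide := true }) [inputBit, targetBit, Finset.sum_insert,
    Finset.mem_insert, Finset.mem_singleton] at h0 h1 h2 h3 h4 hn
  exact c5_aux _ _ _ _ _ _ _ _ _ _ h0 h1 h2 h3 h4 hn

/-- Any local strategy wins at most 5 of the 6 questions. -/
lemma c5_card (f : ZMod 5 → ZMod 2 → ZMod 2) :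
    (Finset.univ.filter
      (fun t : C5Type => ∑ j ∈ involvedSet t, f j (inputBit t j) = targetBit t)).card ≤ 5 := by
  by_contra hcon
  push_neg at hcon
  have hle : (Finset.univ.filter
      (fun t : C5Type => ∑ j ∈ involvedSet t, f j (inputBit t j) = targetBit t)).card
      ≤ Fintype.card C5Type := Finset.card_filter_le _ _
  have hcard : Fintype.card C5Type = 6 := by decide
  rw [hcard] at hle
  have heq : (Finset.univ.filter
      (fun t : C5Type => ∑ j ∈ involvedSet t, f j (inputBit t j) = targetBit t))
      = Finset.univ := by
    apply Finset.eq_univ_of_card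
    rw [hcard]; omega
  refine c5_core f fun t => ?_
  have : t ∈ (Finset.univ.filter
      (fun t : C5Type => ∑ j ∈ involvedSet t, f j (inputBit t j) = targetBit t)) := by
    rw [heq]; exact Finset.mem_univ t
  exact (Finset.mem_filter.mp this).2

/-- The number of globally winning question tuples is at most `5 ^ k`. -/
lemma winCount_le (k : ℕ) (f : Fin k × ZMod 5 → ZMod 2 → ZMod 2) :
    (∑ q : Fin k → C5Type,
      if ∀ g : Fin k,
          ∑ j ∈ involvedSet (q g), f (g, j) (inputBit (q g) j) = targetBit (q g)
      then (1:ℝ) else 0) ≤ 5 ^ k := by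
  have step1 : ∀ q : Fin k → C5Type,
      (if ∀ g : Fin k,
          ∑ j ∈ involvedSet (q g), f (g, j) (inputBit (q g) j) = targetBit (q g)
      then (1:ℝ) else 0)
      = ∏ g : Fin k, (if ∑ j ∈ involvedSet (q g), f (g, j) (inputBit (q g) j)
          = targetBit (q g) then (1:ℝ) else 0) := by
    intro q
    rw [Finset.prod_boole]
    simp
  calc (∑ q : Fin k → C5Type,
      if ∀ g : Fin k,
          ∑ j ∈ involvedSet (q g), f (g, j) (inputBit (q g) j) = targetBit (q g)
      then (1:ℝ) else 0)
      = ∑ q : Fin k → C5Type, ∏ g : Fin k,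
          (if ∑ j ∈ involvedSet (q g), f (g, j) (inputBit (q g) j)
            = targetBit (q g) then (1:ℝ) else 0) := by
        exact Finset.sum_congr rfl fun q _ => step1 q
    _ = ∏ g : Fin k, ∑ t : C5Type,
          (if ∑ j ∈ involvedSet t, f (g, j) (inputBit t j)
            = targetBit t then (1:ℝ) else 0) := by
        rw [Finset.prod_univ_sum, Fintype.piFinset_univ]
    _ ≤ ∏ g : Fin k, (5:ℝ) := by
        apply Finset.prod_le_prod
        · intro g _
          apply Finset.sum_nonneg
          intro t _
          positivity
        · intro g _
          rw [Finset.sum_boole]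
          exact_mod_cast c5_card (fun j => f (g, j))
    _ = 5 ^ k := by simp

/-- Per-player utility bound: at most `v1 * (5/6)^k`. -/
lemma util_le (k : ℕ) (v0 v1 : ℝ) (h0 : 0 ≤ v0) (h01 : v0 ≤ v1)
    (f : Fin k × ZMod 5 → ZMod 2 → ZMod 2) (p : Fin k × ZMod 5) :
    kFoldUtil k v0 v1 f p ≤ v1 * (5 / 6) ^ k := by
  have h1 : 0 ≤ v1 := h0.trans h01
  unfold kFoldUtil
  rw [div_le_iff₀ (by positivity)]
  have hb : (∑ q : Fin k → C5Type,
      if ∀ g : Fin k,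
          ∑ j ∈ involvedSet (q g), f (g, j) (inputBit (q g) j) = targetBit (q g)
      then (if f p (inputBit (q p.1) p.2) = 1 then v1 else v0) else 0)
      ≤ v1 * ∑ q : Fin k → C5Type,
        (if ∀ g : Fin k,
            ∑ j ∈ involvedSet (q g), f (g, j) (inputBit (q g) j) = targetBit (q g)
        then (1:ℝ) else 0) := by
    rw [Finset.mul_sum]
    apply Finset.sum_le_sum
    intro q _
    by_cases hq : ∀ g : Fin k,
        ∑ j ∈ involvedSet (q g), f (g, j) (inputBit (q g) j) = targetBit (q g)
    · simp only [hq, if_true]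
      by_cases ha : f p (inputBit (q p.1) p.2) = 1 <;> simp [ha, h01]
    · simp [hq]
  calc (∑ q : Fin k → C5Type,
      if ∀ g : Fin k,
          ∑ j ∈ involvedSet (q g), f (g, j) (inputBit (q g) j) = targetBit (q g)
      then (if f p (inputBit (q p.1) p.2) = 1 then v1 else v0) else 0)
      ≤ v1 * ∑ q : Fin k → C5Type,
        (if ∀ g : Fin k,
            ∑ j ∈ involvedSet (q g), f (g, j) (inputBit (q g) j) = targetBit (q g)
        then (1:ℝ) else 0) := hb
    _ ≤ v1 * 5 ^ k := by
        exact mul_le_mul_of_nonneg_left (winCount_le k f) h1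
    _ = v1 * (5 / 6) ^ k * 6 ^ k := by
        rw [div_pow, mul_assoc, div_mul_cancel₀]
        positivity

/-- **Unbounded classical/quantum social-welfare separation.** There is an
absolute constant `C > 0` such that for all bounded personal utilities
`0 ≤ v0 ≤ v1`, `v1 > 0`, and every `0 < ε < 1`, there is a positive number `k`
of groups with `k ≤ C * log (1/ε) + C` (so `5k = O(log(1/ε))` players) such that
in the `k`-fold parallel repetition of `NC₀₀(C₅)` every pure local strategy
profile has social welfare at most `ε` times the quantum social welfare
`(v0 + v1)/2`. -/
theorem kFold_unbounded_separation :
    ∃ C : ℝ, 0 < C ∧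
      ∀ v0 v1 : ℝ, 0 ≤ v0 → v0 ≤ v1 → 0 < v1 →
      ∀ ε : ℝ, 0 < ε → ε < 1 →
      ∃ k : ℕ, 0 < k ∧ (k : ℝ) ≤ C * Real.log (1 / ε) + C ∧
        ∀ f : Fin k × ZMod 5 → ZMod 2 → ZMod 2,
          (∑ p : Fin k × ZMod 5, kFoldUtil k v0 v1 f p) / (5 * k)
            ≤ ε * ((v0 + v1) / 2) := by
  have hL : 0 < Real.log (6/5) := Real.log_pos (by norm_num)
  set L := Real.log (6/5) with hLdef
  have hlog2 : (0:ℝ) ≤ Real.log 2 := Real.log_nonneg one_le_two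
  refine ⟨1/L + Real.log 2 / L + 1, by positivity, ?_⟩
  intro v0 v1 hv0 hv01 hv1 ε hε hε1
  have hεlog : 0 < Real.log (1/ε) := Real.log_pos (by rw [lt_div_iff₀ hε]; linarith)
  have h2ε : 0 < Real.log (2/ε) := Real.log_pos (by rw [lt_div_iff₀ hε]; linarith)
  set x := Real.log (2/ε) / L with hx
  have hxpos : 0 < x := div_pos h2ε hL
  set k := ⌈x⌉₊ with hk
  refine ⟨k, Nat.ceil_pos.mpr hxpos, ?_, ?_⟩
  · have h1 : (k : ℝ) ≤ x + 1 := by rw [hk]; exact (Nat.ceil_lt_add_one hxpos.le).le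
    have hlogsplit : Real.log (2/ε) = Real.log 2 + Real.log (1/ε) := by
      rw [show (2/ε : ℝ) = 2 * (1/ε) by ring, Real.log_mul (by norm_num) (by positivity)]
    have hLinv : 0 < 1/L := by positivity
    calc (k:ℝ) ≤ x + 1 := h1
      _ = (1/L) * Real.log (1/ε) + (Real.log 2 / L + 1) := by
          rw [hx, hlogsplit]; ring
      _ ≤ (1/L + Real.log 2/L + 1) * Real.log (1/ε) + (1/L + Real.log 2/L + 1) := by
          nlinarith [mul_nonneg (div_nonneg hlog2 hL.le) hεlog.le]
  · intro f
    have hkpos : 0 < k := Nat.ceil_pos.mpr hxpos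
    have hKpos : (0:ℝ) < k := by exact_mod_cast hkpos
    -- (5/6)^k ≤ ε/2
    have hpow : (5/6:ℝ)^k ≤ ε/2 := by
      have hge : x ≤ (k:ℝ) := by rw [hk]; exact Nat.le_ceil x
      have h1 : Real.log (2/ε) ≤ (k:ℝ) * L := by
        rw [hx] at hge
        calc Real.log (2/ε) = Real.log (2/ε) / L * L := by field_simp
          _ ≤ (k:ℝ) * L := by nlinarith
      have h2 : Real.log (2/ε) ≤ Real.log ((6/5:ℝ)^k) := by
        rw [Real.log_pow]; exact h1
      have h3 : (2/ε:ℝ) ≤ (6/5:ℝ)^k :=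
        (Real.log_le_log_iff (by positivity) (by positivity)).mp h2
      have h4 : (5/6:ℝ)^k = ((6/5:ℝ)^k)⁻¹ := by
        rw [← inv_pow]; norm_num
      rw [h4, show (ε/2:ℝ) = (2/ε)⁻¹ by field_simp]
      exact inv_anti₀ (by positivity) h3
    have h1 : 0 ≤ v1 := hv0.trans hv01
    have hcard : (Finset.univ : Finset (Fin k × ZMod 5)).card = k * 5 := by
      simp [Finset.card_univ]
    have hsum : (∑ p : Fin k × ZMod 5, kFoldUtil k v0 v1 f p)
        ≤ (k * 5 : ℕ) * (v1 * (5/6)^k) := by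
      calc (∑ p : Fin k × ZMod 5, kFoldUtil k v0 v1 f p)
          ≤ (Finset.univ : Finset (Fin k × ZMod 5)).card • (v1 * (5/6)^k) :=
            Finset.sum_le_card_nsmul _ _ _ (fun p _ => util_le k v0 v1 hv0 hv01 f p)
        _ = (k * 5 : ℕ) * (v1 * (5/6)^k) := by rw [hcard, nsmul_eq_mul]
    rw [div_le_iff₀ (by positivity)]
    calc (∑ p : Fin k × ZMod 5, kFoldUtil k v0 v1 f p)
        ≤ (k * 5 : ℕ) * (v1 * (5/6)^k) := hsum
      _ ≤ (k * 5 : ℕ) * (v1 * (ε/2)) := by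
          apply mul_le_mul_of_nonneg_left _ (by positivity)
          exact mul_le_mul_of_nonneg_left hpow h1
      _ ≤ ε * ((v0 + v1)/2) * (5 * k) := by
          push_cast
          nlinarith [mul_nonneg hε.le hv0, hKpos]
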